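/- For all real α > 0 and β > 0, ∫₀¹ (log x) · x^{α−1} (1−x)^{β−1} dx = B(α,β) · (ψ(α) − ψ(α+β)), where ψ denotes the digamma function, i.e. ψ(s) is the derivative at s of the function s ↦ log Γ(s). Equivalently, if G is a random variable with the Beta(α,β) distribution then E[log G] = ψ(α) − ψ(α+β), and by symmetry E[log(1−G)] = ψ(β) − ψ(α+β). -/

import Mathlib

/-- The digamma function `ψ(s)`, the derivative at `s` of `s ↦ log Γ(s)`. -/
noncomputable def digamma (s : ℝ) : ℝ := deriv (fun u : ℝ => Real.log (Real.Gamma u)) s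

/-!
Write `B(a, b) = ∫₀¹ x^(a-1) (1-x)^(b-1) dx = Γ(a)Γ(b)/Γ(a+b)`. Differentiating under the integral
sign in `a` brings down the factor `log x`, while differentiating the Gamma quotient gives
`B(a, b) (ψ(a) - ψ(a+b))` because `Γ' = Γ ψ`. The second identity follows from the first by the
substitution `x ↦ 1 - x`, which swaps `a` and `b`.
-/

open MeasureTheory Real Set intervalIntegral ProbabilityTheory

lemma ofReal_rpow_mul_one_sub_rpow {a b x : ℝ} (hx : x ∈ Icc (0 : ℝ) 1) :
    ((x ^ (a - 1) * (1 - x) ^ (b - 1) : ℝ) : ℂ) =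
      (x : ℂ) ^ ((a : ℂ) - 1) * (1 - (x : ℂ)) ^ ((b : ℂ) - 1) := by
  rw [Complex.ofReal_mul, Complex.ofReal_cpow hx.1, Complex.ofReal_cpow (sub_nonneg.2 hx.2)]
  push_cast
  rfl

lemma Complex.betaIntegral_ofReal {a b : ℝ} :
    Complex.betaIntegral a b = ↑(∫ x in (0 : ℝ)..1, x ^ (a - 1) * (1 - x) ^ (b - 1)) := by
  rw [Complex.betaIntegral, ← integral_ofReal]
  refine integral_congr fun x hx => (ofReal_rpow_mul_one_sub_rpow ?_).symm
  rwa [uIcc_of_le zero_le_one] at hx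

lemma intervalIntegrable_rpow_mul_one_sub_rpow {a b : ℝ} (ha : 0 < a) (hb : 0 < b) :
    IntervalIntegrable (fun x : ℝ => x ^ (a - 1) * (1 - x) ^ (b - 1)) volume 0 1 := by
  have h := Complex.betaIntegral_convergent (u := a) (v := b) (by simpa) (by simpa)
  rw [intervalIntegrable_iff_integrableOn_Icc_of_le zero_le_one] at h ⊢
  refine IntegrableOn.congr_fun h.re (fun x hx => ?_) measurableSet_Icc
  simp [← ofReal_rpow_mul_one_sub_rpow hx]

lemma integral_rpow_mul_one_sub_rpow {a b : ℝ} (ha : 0 < a) (hb : 0 < b) :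
    ∫ x in (0 : ℝ)..1, x ^ (a - 1) * (1 - x) ^ (b - 1) = beta a b := by
  rw [beta_eq_betaIntegralReal a b ha hb, Complex.betaIntegral_ofReal, Complex.ofReal_re]

lemma beta_comm (a b : ℝ) : beta a b = beta b a := by
  rw [beta, beta, mul_comm, add_comm]

lemma neg_log_mul_rpow_le {t a c δ : ℝ} (ht₀ : 0 < t) (ht₁ : t ≤ 1) (hca : c ≤ a) (hδ : 0 < δ) :
    -log t * t ^ a ≤ t ^ (c - δ) / δ := by
  have hlog : -log t ≤ t ^ (-δ) / δ := by
    simpa [log_inv, rpow_neg ht₀.le, inv_rpow ht₀.le] using log_le_rpow_div (inv_nonneg.2 ht₀.le) hδ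
  calc -log t * t ^ a ≤ t ^ (-δ) / δ * t ^ c :=
        mul_le_mul hlog (rpow_le_rpow_of_exponent_ge ht₀ ht₁ hca) (by positivity) (by positivity)
    _ = t ^ (c - δ) / δ := by rw [div_mul_eq_mul_div, ← rpow_add ht₀, neg_add_eq_sub]

lemma hasDerivAt_Gamma_of_pos {s : ℝ} (hs : 0 < s) :
    HasDerivAt Gamma (Gamma s * digamma s) s := by
  have hΓ :=
    (differentiableAt_Gamma fun m => ((neg_nonpos.2 m.cast_nonneg).trans_lt hs).ne').hasDerivAt
  have hψ : digamma s = deriv Gamma s / Gamma s := (hΓ.log (Gamma_pos_of_pos hs).ne').deriv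
  rwa [hψ, mul_div_cancel₀ _ (Gamma_pos_of_pos hs).ne']

lemma hasDerivAt_beta_left {a b : ℝ} (ha : 0 < a) (hb : 0 < b) :
    HasDerivAt (fun x => beta x b) (beta a b * (digamma a - digamma (a + b))) a := by
  have hab : 0 < a + b := add_pos ha hb
  have hnum := (hasDerivAt_Gamma_of_pos ha).mul_const (Gamma b)
  have hden := (hasDerivAt_Gamma_of_pos hab).comp_add_const a b
  refine (hnum.div hden (Gamma_pos_of_pos hab).ne').congr_deriv ?_
  have hΓab := (Gamma_pos_of_pos hab).ne'
  simp only [beta]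
  field_simp

lemma hasDerivAt_integral_rpow_mul_one_sub_rpow {a b : ℝ} (ha : 0 < a) (hb : 0 < b) :
    HasDerivAt (fun c => ∫ x in (0 : ℝ)..1, x ^ (c - 1) * (1 - x) ^ (b - 1))
      (∫ x in (0 : ℝ)..1, log x * (x ^ (a - 1) * (1 - x) ^ (b - 1))) a := by
  -- On `c ∈ (a/2, 3a/2)` the `c`-derivative `log x * x^(c-1) (1-x)^(b-1)` is dominated by
  -- the Beta integrand with parameters `(a/4, b)`, since `-log x ≤ x^(-a/4) / (a/4)`.
  refine (hasDerivAt_integral_of_dominated_loc_of_deriv_le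
    (F := fun c x => x ^ (c - 1) * (1 - x) ^ (b - 1))
    (F' := fun c x => log x * (x ^ (c - 1) * (1 - x) ^ (b - 1)))
    (bound := fun x => x ^ (a / 4 - 1) * (1 - x) ^ (b - 1) / (a / 4))
    (Metric.ball_mem_nhds a (half_pos ha))
    (.of_forall fun c => Measurable.aestronglyMeasurable (by fun_prop))
    (intervalIntegrable_rpow_mul_one_sub_rpow ha hb)
    (Measurable.aestronglyMeasurable (by fun_prop))
    (.of_forall fun x hx c hc => ?_)
    ((intervalIntegrable_rpow_mul_one_sub_rpow (by positivity) hb).div_const _)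
    (.of_forall fun x hx c _ => ?_)).2
  all_goals rw [uIoc_of_le zero_le_one] at hx
  · have hc' : a / 2 - 1 ≤ c - 1 := by
      rw [Metric.mem_ball, dist_eq, abs_lt] at hc
      linarith
    have hlog := neg_log_mul_rpow_le hx.1 hx.2 hc' (by positivity : 0 < a / 4)
    have h1x : 0 ≤ (1 - x) ^ (b - 1) := rpow_nonneg (sub_nonneg.2 hx.2) _
    rw [norm_mul, norm_mul, norm_of_nonpos (log_nonpos hx.1.le hx.2),
      norm_of_nonneg (rpow_nonneg hx.1.le _), norm_of_nonneg h1x, ← mul_assoc]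
    calc -log x * x ^ (c - 1) * (1 - x) ^ (b - 1)
        ≤ x ^ (a / 2 - 1 - a / 4) / (a / 4) * (1 - x) ^ (b - 1) :=
          mul_le_mul_of_nonneg_right hlog h1x
      _ = _ := by rw [show a / 2 - 1 - a / 4 = a / 4 - 1 by ring, div_mul_eq_mul_div]
  · refine (((hasStrictDerivAt_const_rpow hx.1 (c - 1)).hasDerivAt.comp c
      ((hasDerivAt_id c).sub_const 1)).mul_const _).congr_deriv ?_
    simp only [mul_one]
    ring

lemma integral_log_mul_rpow_mul_one_sub_rpow {a b : ℝ} (ha : 0 < a) (hb : 0 < b) :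
    ∫ x in (0 : ℝ)..1, log x * (x ^ (a - 1) * (1 - x) ^ (b - 1)) =
      beta a b * (digamma a - digamma (a + b)) := by
  have hbeta : (fun c => ∫ x in (0 : ℝ)..1, x ^ (c - 1) * (1 - x) ^ (b - 1)) =ᶠ[nhds a]
      fun c => beta c b := by
    filter_upwards [eventually_gt_nhds ha] with c hc
    exact integral_rpow_mul_one_sub_rpow hc hb
  exact (hasDerivAt_integral_rpow_mul_one_sub_rpow ha hb).unique
    ((hasDerivAt_beta_left ha hb).congr_of_eventuallyEq hbeta)

/-- **Log-moments of the Beta distribution.**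
For all real `α > 0` and `β > 0`,
`∫₀¹ (log x) x^(α−1)(1−x)^(β−1) dx = B(α,β) (ψ(α) − ψ(α+β))` where
`B(α,β) = Γ(α)Γ(β)/Γ(α+β)`; equivalently, if `G ∼ Beta(α,β)` then
`E[log G] = ψ(α) − ψ(α+β)`, and by symmetry `E[log (1−G)] = ψ(β) − ψ(α+β)`, i.e.
`∫₀¹ (log (1−x)) x^(α−1)(1−x)^(β−1) dx = B(α,β) (ψ(β) − ψ(α+β))`. -/
theorem beta_log_moment (α β : ℝ) (hα : 0 < α) (hβ : 0 < β) :
    (∫ x in (0:ℝ)..1, Real.log x * (x ^ (α - 1) * (1 - x) ^ (β - 1))) =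
      (Real.Gamma α * Real.Gamma β / Real.Gamma (α + β)) * (digamma α - digamma (α + β)) ∧
    (∫ x in (0:ℝ)..1, Real.log (1 - x) * (x ^ (α - 1) * (1 - x) ^ (β - 1))) =
      (Real.Gamma α * Real.Gamma β / Real.Gamma (α + β)) * (digamma β - digamma (α + β)) := by
  refine ⟨integral_log_mul_rpow_mul_one_sub_rpow hα hβ, ?_⟩
  calc ∫ x in (0:ℝ)..1, log (1 - x) * (x ^ (α - 1) * (1 - x) ^ (β - 1))
      = ∫ x in (0:ℝ)..1, log x * (x ^ (β - 1) * (1 - x) ^ (α - 1)) := by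
        simpa [mul_comm] using
          integral_comp_sub_left (a := 0) (b := 1)
            (fun x => log x * (x ^ (β - 1) * (1 - x) ^ (α - 1))) 1
    _ = beta β α * (digamma β - digamma (β + α)) :=
        integral_log_mul_rpow_mul_one_sub_rpow hβ hα
    _ = _ := by rw [beta_comm, add_comm, beta]
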